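/- Let d, n ≥ 1, let Σ be a d×d real symmetric positive definite matrix, let R ∈ SO(d), and set R_Σ = Σ^{1/2} R Σ^{-1/2}. Let P_Σ denote the n-fold product of the centered multivariate Gaussian measure on ℝ^d with covariance Σ, and let W : (ℝ^d)^n → Matrix(d,d,ℝ) be W(y₁,…,y_n) = Σᵢ yᵢ yᵢᵀ. Then the pushforward of P_Σ under y ↦ R_Σ · W(y) · R_Σᵀ equals the pushforward of P_Σ under W; i.e., the Wishart distribution W(Σ, n) is invariant under the action X ↦ R_Σ X R_Σᵀ of the group H_Σ. -/

import Mathlib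

open Matrix MeasureTheory

/-- Matrices inherit the product measurable structure of `Fin d → Fin d → ℝ`. -/
instance {d : ℕ} : MeasurableSpace (Matrix (Fin d) (Fin d) ℝ) :=
  inferInstanceAs (MeasurableSpace (Fin d → Fin d → ℝ))

/-- The density of the centered multivariate Gaussian distribution with covariance `S`
with respect to Lebesgue measure on `ℝ^d`. -/
noncomputable def gaussianDensity {d : ℕ} (S : Matrix (Fin d) (Fin d) ℝ) (v : Fin d → ℝ) : ℝ :=
  (2 * Real.pi) ^ (-(d : ℝ) / 2) * S.det ^ (-(1 : ℝ) / 2) *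
    Real.exp (-(1 / 2) * (v ⬝ᵥ S⁻¹ *ᵥ v))

/-- The centered multivariate Gaussian measure on `ℝ^d` with covariance matrix `S`. -/
noncomputable def gaussianMeasure {d : ℕ} (S : Matrix (Fin d) (Fin d) ℝ) :
    Measure (Fin d → ℝ) :=
  volume.withDensity fun v => ENNReal.ofReal (gaussianDensity S v)

/-- The sum of outer products `Σᵢ yᵢ yᵢᵀ` of a family of `n` vectors of `ℝ^d`. -/
noncomputable def wishartSample {d n : ℕ} (y : Fin n → Fin d → ℝ) :
    Matrix (Fin d) (Fin d) ℝ :=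
  ∑ i, Matrix.vecMulVec (y i) (y i)

open scoped Classical in
/-- The positive semidefinite square root of a matrix, extended to a total function
(junk value `0` when the matrix is not positive semidefinite). -/
noncomputable def matSqrt {d : ℕ} (A : Matrix (Fin d) (Fin d) ℝ) : Matrix (Fin d) (Fin d) ℝ :=
  if hA : A.PosSemidef then
    (hA.1.eigenvectorUnitary : Matrix (Fin d) (Fin d) ℝ) *
      diagonal ((↑) ∘ (√·) ∘ hA.1.eigenvalues) *
      (star hA.1.eigenvectorUnitary : Matrix (Fin d) (Fin d) ℝ)
  else 0

/-! With `Q = Σ^{1/2}` symmetric, `T = Q R Q⁻¹` satisfies `T Σ Tᵀ = Q R Rᵀ Q = Σ`; hence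
`Tᵀ Σ⁻¹ T = Σ⁻¹` and `(det T)² = 1`, so `v ↦ T v` preserves both Lebesgue measure and the
Gaussian density, i.e. it preserves `γ_Σ`, and coordinatewise it preserves `γ_Σ^{⊗n}`.
Since `T W(y) Tᵀ = W(T y₁, …, T yₙ)`, pushing `γ_Σ^{⊗n}` forward by `T W Tᵀ` gives the law of `W`. -/

open scoped MatrixOrder ENNReal

theorem MeasureTheory.MeasurePreserving.withDensity_comp {α β : Type*} [MeasurableSpace α]
    [MeasurableSpace β] {μ : Measure α} {ν : Measure β} {f : α → β}
    (hf : MeasurePreserving f μ ν) {g : β → ℝ≥0∞} (hg : Measurable g) :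
    MeasurePreserving f (μ.withDensity (g ∘ f)) (ν.withDensity g) := by
  refine ⟨hf.measurable, ?_⟩
  ext s hs
  rw [withDensity_apply _ hs, Measure.map_apply hf.measurable hs,
    withDensity_apply _ (hf.measurable hs), ← hf.map_eq, setLIntegral_map hs hg hf.measurable]
  rfl

namespace Matrix

variable {ι : Type*} [Fintype ι] [DecidableEq ι]

theorem measurePreserving_mulVec_volume {T : Matrix ι ι ℝ} (hT : |T.det| = 1) :
    MeasurePreserving (T *ᵥ ·) volume volume := by
  have hT₀ : T.det ≠ 0 := fun h => by simp [h] at hT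
  refine ⟨by fun_prop, ?_⟩
  rw [show (T *ᵥ ·) = ⇑(toLin' T) from rfl, Real.map_matrix_volume_pi_eq_smul_volume_pi hT₀,
    abs_inv, hT, inv_one, ENNReal.ofReal_one, one_smul]

theorem mul_mul_transpose_eq_of_conj_orthogonal {α : Type*} [CommRing α] {Q O : Matrix ι ι α}
    (hQ : IsUnit Q) (hO : O * Oᵀ = 1) :
    Q * O * Q⁻¹ * (Q * Qᵀ) * (Q * O * Q⁻¹)ᵀ = Q * Qᵀ := by
  have hQ' : IsUnit Q.det := (isUnit_iff_isUnit_det Q).mp hQ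
  have hQt : IsUnit Qᵀ.det := by rwa [det_transpose]
  simp only [transpose_mul, transpose_nonsing_inv, Matrix.mul_assoc,
    nonsing_inv_mul_cancel_left _ _ hQ', mul_nonsing_inv_cancel_left _ _ hQt]
  rw [← Matrix.mul_assoc O, hO, Matrix.one_mul]

end Matrix

section

variable {d : ℕ}

theorem matSqrt_eq_sqrt {A : Matrix (Fin d) (Fin d) ℝ} (hA : A.PosSemidef) :
    matSqrt A = CFC.sqrt A := by
  rw [matSqrt, dif_pos hA, CFC.sqrt_eq_real_sqrt A hA.nonneg, cfcₙ_eq_cfc, hA.1.cfc_eq,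
    IsHermitian.cfc, Unitary.conjStarAlgAut_apply, RCLike.ofReal_real_eq_id]
  rfl

theorem matSqrt_mul_self {A : Matrix (Fin d) (Fin d) ℝ} (hA : A.PosSemidef) :
    matSqrt A * matSqrt A = A := by
  rw [matSqrt_eq_sqrt hA]
  exact CFC.sqrt_mul_sqrt_self A hA.nonneg

theorem transpose_matSqrt {A : Matrix (Fin d) (Fin d) ℝ} (hA : A.PosSemidef) :
    (matSqrt A)ᵀ = matSqrt A := by
  rw [matSqrt_eq_sqrt hA, ← conjTranspose_eq_transpose_of_trivial]
  exact (CFC.sqrt_nonneg A).isSelfAdjoint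

theorem isUnit_matSqrt {A : Matrix (Fin d) (Fin d) ℝ} (hA : A.PosDef) :
    IsUnit (matSqrt A) :=
  isUnit_of_mul_isUnit_left ((matSqrt_mul_self hA.posSemidef).symm ▸ hA.isUnit)

instance (S : Matrix (Fin d) (Fin d) ℝ) : SigmaFinite (gaussianMeasure S) :=
  SigmaFinite.withDensity_ofReal _

theorem measurable_gaussianDensity (S : Matrix (Fin d) (Fin d) ℝ) :
    Measurable (gaussianDensity S) := by
  unfold gaussianDensity
  fun_prop

theorem gaussianDensity_mulVec {S T : Matrix (Fin d) (Fin d) ℝ} (h : Tᵀ * S⁻¹ * T = S⁻¹)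
    (v : Fin d → ℝ) : gaussianDensity S (T *ᵥ v) = gaussianDensity S v := by
  have hquad : (T *ᵥ v) ⬝ᵥ S⁻¹ *ᵥ (T *ᵥ v) = v ⬝ᵥ (Tᵀ * S⁻¹ * T) *ᵥ v := by
    rw [← mulVec_mulVec, ← mulVec_mulVec, dotProduct_mulVec v Tᵀ, vecMul_transpose]
  simp only [gaussianDensity, hquad, h]

theorem measurePreserving_mulVec_gaussianMeasure {S T : Matrix (Fin d) (Fin d) ℝ}
    (hS : IsUnit S) (hT : T * S * Tᵀ = S) :
    MeasurePreserving (T *ᵥ ·) (gaussianMeasure S) (gaussianMeasure S) := by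
  have hS' : IsUnit S.det := (isUnit_iff_isUnit_det S).mp hS
  have hdet : T.det * T.det = 1 := by
    have := congrArg det hT
    rw [det_mul, det_mul, det_transpose, mul_right_comm] at this
    exact (mul_left_eq_self₀.mp this).resolve_right hS'.ne_zero
  have hT' : IsUnit T.det := isUnit_iff_ne_zero.mpr (left_ne_zero_of_mul_eq_one hdet)
  have hTt : IsUnit Tᵀ.det := by rwa [det_transpose]
  have hinv : Tᵀ * S⁻¹ * T = S⁻¹ := by
    conv_lhs => rw [← hT]
    simp only [Matrix.mul_inv_rev, Matrix.mul_assoc, mul_nonsing_inv_cancel_left _ _ hTt,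
      nonsing_inv_mul _ hT', Matrix.mul_one]
  have hρ : (fun v => ENNReal.ofReal (gaussianDensity S v)) ∘ (T *ᵥ ·) =
      fun v => ENNReal.ofReal (gaussianDensity S v) :=
    funext fun v => by simp only [Function.comp_apply, gaussianDensity_mulVec hinv]
  have habs : |T.det| = 1 := by
    rw [← pow_eq_one_iff_of_nonneg (abs_nonneg _) two_ne_zero, sq_abs, sq, hdet]
  have hvol := measurePreserving_mulVec_volume habs
  simpa only [gaussianMeasure, hρ] using
    hvol.withDensity_comp (measurable_gaussianDensity S).ennreal_ofReal

theorem measurable_wishartSample {n : ℕ} :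
    Measurable (wishartSample : (Fin n → Fin d → ℝ) → Matrix (Fin d) (Fin d) ℝ) := by
  refine measurable_pi_lambda _ fun i => measurable_pi_lambda _ fun j => ?_
  simp only [wishartSample, Matrix.sum_apply, vecMulVec_apply]
  fun_prop

theorem mul_wishartSample_mul_transpose {n : ℕ} (T : Matrix (Fin d) (Fin d) ℝ)
    (y : Fin n → Fin d → ℝ) : T * wishartSample y * Tᵀ = wishartSample (fun i => T *ᵥ y i) := by
  simp only [wishartSample, Finset.mul_sum, Finset.sum_mul, mul_vecMulVec, vecMulVec_mul,
    vecMul_transpose]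

theorem map_wishartSample_conj_eq {n : ℕ} {S T : Matrix (Fin d) (Fin d) ℝ} (hS : IsUnit S)
    (hT : T * S * Tᵀ = S) :
    Measure.map (fun y : Fin n → Fin d → ℝ => T * wishartSample y * Tᵀ)
        (Measure.pi fun _ => gaussianMeasure S)
      = Measure.map wishartSample (Measure.pi fun _ : Fin n => gaussianMeasure S) := by
  have hpi : MeasurePreserving (fun (y : Fin n → Fin d → ℝ) i => T *ᵥ y i)
      (Measure.pi fun _ => gaussianMeasure S) (Measure.pi fun _ => gaussianMeasure S) :=
    measurePreserving_pi _ _ fun _ => measurePreserving_mulVec_gaussianMeasure hS hT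
  conv_rhs => rw [← hpi.map_eq]
  rw [Measure.map_map measurable_wishartSample hpi.measurable]
  simp only [mul_wishartSample_mul_transpose, Function.comp_def]

end

theorem wishart_invariant_H_sigma_general (d n : ℕ)
    (S R : Matrix (Fin d) (Fin d) ℝ) (hS : S.PosDef)
    (hR : R * Rᵀ = 1) :
    Measure.map
        (fun y : Fin n → Fin d → ℝ =>
          (matSqrt S * R * (matSqrt S)⁻¹) * wishartSample y * (matSqrt S * R * (matSqrt S)⁻¹)ᵀ)
        (Measure.pi fun _ : Fin n => gaussianMeasure S)
      = Measure.map (fun y : Fin n → Fin d → ℝ => wishartSample y)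
        (Measure.pi fun _ : Fin n => gaussianMeasure S) := by
  have h := mul_mul_transpose_eq_of_conj_orthogonal (isUnit_matSqrt hS) hR
  rw [transpose_matSqrt hS.posSemidef, matSqrt_mul_self hS.posSemidef] at h
  exact map_wishartSample_conj_eq hS.isUnit h

/-- the Wishart distribution `W(Σ, n)` is invariant under the action
`X ↦ R_Σ X R_Σᵀ`, where `R_Σ = Σ^{1/2} R Σ^{-1/2}` and `R ∈ SO(d)`. -/
theorem wishart_invariant_H_sigma (d n : ℕ) (hd : 1 ≤ d) (hn : 1 ≤ n)
    (S R : Matrix (Fin d) (Fin d) ℝ) (hS : S.PosDef)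
    (hR : R * Rᵀ = 1) (hdetR : R.det = 1) :
    Measure.map
        (fun y : Fin n → Fin d → ℝ =>
          (matSqrt S * R * (matSqrt S)⁻¹) * wishartSample y * (matSqrt S * R * (matSqrt S)⁻¹)ᵀ)
        (Measure.pi fun _ : Fin n => gaussianMeasure S)
      = Measure.map (fun y : Fin n → Fin d → ℝ => wishartSample y)
        (Measure.pi fun _ : Fin n => gaussianMeasure S) :=
  wishart_invariant_H_sigma_general d n S R hS hR
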